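/- Let X denote the lexicographic product ω₁ ×ₗ ℚ, and let E ⊆ X be a countable downward-closed set. Then the set {z ∈ X | z ∉ E and z is not a least element of X ∖ E}, with the order induced from X, is order-isomorphic to X. -/

import Mathlib

/-- The linearly ordered set `ω₁` of countable ordinals, realized as the canonical type
of order type `ω₁ = (ℵ₁).ord`. -/
abbrev OmegaOne : Type := (Cardinal.aleph 1).ord.ToType

/-- The lexicographic product `ω₁ ×ₗ ℚ`. -/
abbrev KrivineX : Type := OmegaOne ×ₗ ℚ

/-!
Let `S` be the set in question. It is an upper set without a least element whose complement
is countable. Since `ω₁` has uncountable cofinality, the countable set `Sᶜ` lies below some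
`p = (a, 0)`, so `S = (S ∩ Iio p) ⊕ₗ Ici p` while `X = Iio p ⊕ₗ Ici p`. Both `S ∩ Iio p` and
`Iio p` are countable dense linear orders without endpoints, hence isomorphic by Cantor's
theorem.
-/

open Cardinal Set

def IsUpperSet.orderIsoIci {α : Type*} [Preorder α] {S : Set α} (hS : IsUpperSet S) (s : S) :
    Ici s ≃o Ici (s : α) where
  toFun x := ⟨x.1, x.2⟩
  invFun y := ⟨⟨y, hS y.2 s.2⟩, y.2⟩
  left_inv _ := rfl
  right_inv _ := rfl
  map_rel_iff' := Iff.rfl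

section UpperSet

variable {α : Type*} [LinearOrder α]

theorem exists_forall_lt_of_countable (hα : ℵ₀ < Order.cof α) {s : Set α}
    (hs : s.Countable) : ∃ a, ∀ x ∈ s, x < a :=
  not_isCofinal_iff.1 fun h =>
    ((Order.cof_le h).trans (le_aleph0_iff_set_countable.2 hs)).not_gt hα

theorem IsUpperSet.nonempty_orderIso [DenselyOrdered α] [NoMinOrder α] {S : Set α}
    (hS : IsUpperSet S) [NoMinOrder S] {p : α} (hp : p ∈ S) (hcount : (Iio p).Countable) :
    Nonempty (S ≃o α) := by
  have := hS.ordConnected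
  let s : S := ⟨p, hp⟩
  have : Countable (Iio p) := hcount.to_subtype
  have : Countable (Iio s) := (hcount.preimage Subtype.val_injective).to_subtype
  obtain ⟨e⟩ : Nonempty (Iio s ≃o Iio p) := Order.iso_of_countable_dense _ _
  exact ⟨(OrderIso.sumLexIioIci s).symm.trans <|
    (e.sumLexCongr (hS.orderIsoIci s)).trans (OrderIso.sumLexIioIci p)⟩

variable {E : Set α}

theorem IsLowerSet.isUpperSet_setOf_not_isLeast_compl (hE : IsLowerSet E) :
    IsUpperSet {z | z ∉ E ∧ ¬ IsLeast Eᶜ z} := by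
  rintro z w hzw ⟨hzE, hz⟩
  have hwE : w ∉ E := IsLowerSet.compl hE hzw hzE
  exact ⟨hwE, fun hw => hz (le_antisymm hzw (hw.2 hzE) ▸ hw)⟩

theorem IsLowerSet.noMinOrder_setOf_not_isLeast_compl [DenselyOrdered α] (hE : IsLowerSet E) :
    NoMinOrder {z | z ∉ E ∧ ¬ IsLeast Eᶜ z} := by
  refine ⟨fun ⟨z, hzE, hz⟩ => ?_⟩
  obtain ⟨w, hwE, hwz⟩ : ∃ w ∉ E, w < z := by
    simpa [IsLeast, lowerBounds, hzE] using hz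
  obtain ⟨v, hwv, hvz⟩ := exists_between hwz
  refine ⟨⟨v, IsLowerSet.compl hE hwv.le hwE, fun hv => ?_⟩, hvz⟩
  exact (hv.2 hwE).not_gt hwv

theorem countable_compl_setOf_not_isLeast_compl (hE : E.Countable) :
    {z | z ∉ E ∧ ¬ IsLeast Eᶜ z}ᶜ.Countable := by
  have hleast : {z | IsLeast Eᶜ z}.Subsingleton := fun _ hx _ hy => hx.unique hy
  exact (hE.union hleast.countable).mono fun z hz => (not_and_or.1 hz).imp not_not.1 not_not.1

end UpperSet

theorem Prod.Lex.countable_Iio_toLex {α β : Type*} [Preorder α] [Preorder β] [Countable β]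
    {a : α} (ha : (Iic a).Countable) (b : β) : (Iio (toLex (a, b))).Countable := by
  refine ((ha.prod countable_univ).image toLex).mono fun x hx => ?_
  exact ⟨ofLex x, ⟨Prod.Lex.monotone_fst_ofLex (le_of_lt hx), mem_univ _⟩, rfl⟩

theorem OmegaOne.aleph0_lt_cof : ℵ₀ < Order.cof OmegaOne := by
  rw [Ordinal.cof_toType, isRegular_aleph_one.cof_ord]
  exact aleph0_lt_aleph_one

theorem OmegaOne.countable_Iic (a : OmegaOne) : (Iic a).Countable := by
  rw [← Iio_insert]
  refine Countable.insert a (le_aleph0_iff_set_countable.1 (lt_aleph_one_iff.1 ?_))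
  simpa using mk_Iio_lt a (by simp)

theorem compl_of_countable_initial_segment_orderIso (E : Set KrivineX) (hE : E.Countable)
    (hdc : ∀ y e : KrivineX, e ∈ E → y ≤ e → y ∈ E) :
    Nonempty (↥{z : KrivineX | z ∉ E ∧ ¬ IsLeast Eᶜ z} ≃o KrivineX) := by
  have hlower : IsLowerSet E := fun e y hye he => hdc y e he hye
  have := hlower.noMinOrder_setOf_not_isLeast_compl
  obtain ⟨a, ha⟩ := exists_forall_lt_of_countable OmegaOne.aleph0_lt_cof
    ((countable_compl_setOf_not_isLeast_compl hE).image fun x => (ofLex x).1)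
  have hp : toLex (a, (0 : ℚ)) ∈ {z : KrivineX | z ∉ E ∧ ¬ IsLeast Eᶜ z} :=
    by_contra fun h => (ha _ ⟨_, h, rfl⟩).false
  exact hlower.isUpperSet_setOf_not_isLeast_compl.nonempty_orderIso hp
    (Prod.Lex.countable_Iio_toLex (OmegaOne.countable_Iic a) 0)
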